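/- arXiv:1104.3774 — 2 statements merged into one kernel-verified Lean document; each statement's English description precedes it below -/
import Mathlib

section
/- Let L be a solvable Lie algebra and U a subalgebra. Every minimal element of Ω(U,L) is a U-prefrattini subalgebra of L. -/
open LieAlgebra

namespace Paper

variable {F : Type*} [Field F] {L : Type*} [LieRing L] [LieAlgebra F L]

/-- The interval `[U:L]` is complemented: every subalgebra containing `U`
has a complement over `U`. -/
def IsComplementedInterval (U : LieSubalgebra F L) : Prop :=
  ∀ S : LieSubalgebra F L, U ≤ S →
    ∃ T : LieSubalgebra F L, U ≤ T ∧ S ⊓ T = U ∧ S ⊔ T = ⊤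

/-- `Ω(U,L)`. -/
def Omega (U : LieSubalgebra F L) : Set (LieSubalgebra F L) :=
  {S | U ≤ S ∧ IsComplementedInterval S}

/-- `Ω(U,L)_min`, the inclusion-minimal elements. -/
def OmegaMin (U : LieSubalgebra F L) : Set (LieSubalgebra F L) :=
  {S | S ∈ Omega U ∧ ∀ T ∈ Omega U, T ≤ S → T = S}

/-- `φ(U,L)`, the intersection of all maximal subalgebras containing `U`. -/
def phi (U : LieSubalgebra F L) : LieSubalgebra F L :=
  sInf {M : LieSubalgebra F L | IsCoatom M ∧ U ≤ M}

/-- A subalgebra which is an ideal of `L`. -/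
def IsIdealSubalg (A : LieSubalgebra F L) : Prop :=
  ∀ x : L, ∀ a ∈ A, ⁅x, a⁆ ∈ A

/-- A minimal ideal of `L`. -/
def IsMinimalIdeal (A : LieSubalgebra F L) : Prop :=
  A ≠ ⊥ ∧ IsIdealSubalg A ∧
    ∀ B : LieSubalgebra F L, IsIdealSubalg B → B ≤ A → B = ⊥ ∨ B = A

/-- A chief series `0 = A 0 < A 1 < … < A n = L`. -/
def IsChiefSeries (A : ℕ → LieSubalgebra F L) (n : ℕ) : Prop :=
  A 0 = ⊥ ∧ A n = ⊤ ∧ (∀ i, IsIdealSubalg (A i)) ∧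
    ∀ i < n, A i < A (i + 1) ∧
      ∀ B : LieSubalgebra F L, IsIdealSubalg B → A i ≤ B → B ≤ A (i + 1) →
        B = A i ∨ B = A (i + 1)

/-- The chief factor `A/B` is `U`-Frattini. -/
def IsUFrattiniFactor (U B A : LieSubalgebra F L) : Prop :=
  A ≤ phi (U ⊔ B) ∨ U ⊔ B = ⊤

/-- `B` is a `U`-prefrattini subalgebra with respect to the series `A`. -/
def IsPrefrattiniWrt (U : LieSubalgebra F L) (A : ℕ → LieSubalgebra F L) (n : ℕ)
    (B : LieSubalgebra F L) : Prop :=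
  ∃ M : ℕ → LieSubalgebra F L,
    (∀ i < n, ¬ IsUFrattiniFactor U (A i) (A (i + 1)) →
      IsCoatom (M i) ∧ U ⊔ A i ≤ M i ∧ ¬ A (i + 1) ≤ M i) ∧
    B = ⨅ i ∈ {i | i < n ∧ ¬ IsUFrattiniFactor U (A i) (A (i + 1))}, M i

/-- `B` is a `U`-prefrattini subalgebra of `L` (with respect to some chief series). -/
def IsPrefrattini (U B : LieSubalgebra F L) : Prop :=
  ∃ (n : ℕ) (A : ℕ → LieSubalgebra F L), IsChiefSeries A n ∧ IsPrefrattiniWrt U A n B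

/-- The lower central series of an ideal `I` of `L` (computed inside `L`):
`idealLCS I k = I^{k+1}`. -/
def idealLCS (I : LieIdeal F L) : ℕ → LieIdeal F L
  | 0 => I
  | k + 1 => ⁅I, idealLCS I k⁆

/-- The nilpotent residual `L^∞`. -/
def nilpotentResidual (F : Type*) (L : Type*) [Field F] [LieRing L] [LieAlgebra F L] :
    LieIdeal F L :=
  ⨅ k, LieModule.lowerCentralSeries F L L k

/-- The exponential `exp (ad x)` truncated below `p` (all higher terms vanish when
`ad x` has nilpotency index at most `p`). -/
noncomputable def expAd (F : Type*) {L : Type*} [Field F] [LieRing L] [LieAlgebra F L]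
    (p : ℕ) (x : L) : L →ₗ[F] L :=
  ∑ r ∈ Finset.range p, (r.factorial : F)⁻¹ • ((LieAlgebra.ad F L x : Module.End F L) ^ r : Module.End F L)

/-- The quotient map `L → L ⧸ I` as a morphism of Lie algebras. -/
def quotLieHom (I : LieIdeal F L) : L →ₗ⁅F⁆ L ⧸ I :=
  { I.toSubmodule.mkQ with map_lie' := rfl }

end Paper

/-!
Downward induction along the chief series: for each `k`, every `S ⊇ U + A k` with `[S:L]`
complemented contains some `W ⊇ U + A k` with `[W:L]` complemented that is cut out by maximal
subalgebras for the non-`U`-Frattini factors `A (i+1)/A i` with `i ≥ k`.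

Given such a `W₀` for `S + A (k+1)`: if `A (k+1)/A k` is `U`-Frattini, then
`A (k+1) ⊆ φ(S) = S`, so `W₀ ⊆ S`. Otherwise some maximal `M ⊇ U + A k` misses `A (k+1)` and
can be chosen with `(S + A (k+1)) ∩ M ⊆ S`; then `W₀ ∩ M` works. Solvability enters here:
chief factors are abelian, so a subalgebra `X ⊇ A k` with `X + A (k+1) = L` either contains
`A (k+1)` or meets it in `A k`.

For `k = 0`, minimality of `S` in `Ω(U,L)` forces `W = S`.
-/

theorem LieIdeal.lie_le_of_covBy {F L : Type*} [Field F] [LieRing L] [LieAlgebra F L]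
    [IsSolvable L] {I J : LieIdeal F L} (h : I ⋖ J) : ⁅J, J⁆ ≤ I := by
  rcases h.eq_or_eq le_sup_left (sup_le h.le (LieSubmodule.lie_le_left J J)) with hI | hJ
  · exact le_sup_right.trans hI.le
  -- otherwise `J = I ⊔ ⁅J, J⁆`, so `J` lies in `I` plus every term of its derived series
  have hJD : ∀ k, J ≤ I ⊔ derivedSeriesOfIdeal F L k J := by
    intro k
    induction k with
    | zero => exact le_sup_right
    | succ k ih =>
      set D := derivedSeriesOfIdeal F L k J
      have hbound : ⁅I ⊔ D, I ⊔ D⁆ ≤ I ⊔ ⁅D, D⁆ := by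
        rw [LieSubmodule.sup_lie, LieSubmodule.lie_sup (I := D) (N := I) (N' := D)]
        exact sup_le (le_sup_of_le_left (LieSubmodule.lie_le_left _ _))
          (sup_le (le_sup_of_le_left (LieSubmodule.lie_le_right _ _)) le_sup_right)
      calc J = I ⊔ ⁅J, J⁆ := hJ.symm
        _ ≤ I ⊔ ⁅I ⊔ D, I ⊔ D⁆ := sup_le_sup_left (LieSubmodule.mono_lie ih ih) I
        _ ≤ I ⊔ (I ⊔ ⁅D, D⁆) := sup_le_sup_left hbound I
        _ = I ⊔ derivedSeriesOfIdeal F L (k + 1) J := by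
          rw [← sup_assoc, sup_idem, derivedSeriesOfIdeal_succ]
  obtain ⟨k, hk⟩ := IsSolvable.solvable F L
  have hDk : derivedSeriesOfIdeal F L k J = ⊥ :=
    le_bot_iff.1 (hk ▸ derivedSeriesOfIdeal_le le_top le_rfl)
  exact absurd (by simpa [hDk] using hJD k) h.lt.not_ge

namespace Paper

variable {F : Type*} [Field F] {L : Type*} [LieRing L] [LieAlgebra F L]

theorem IsIdealSubalg.coe_sup_right {X I : LieSubalgebra F L} (hI : IsIdealSubalg I) :
    ((X ⊔ I : LieSubalgebra F L) : Submodule F L) = (X : Submodule F L) ⊔ I := by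
  let K : LieSubalgebra F L :=
    { (X : Submodule F L) ⊔ (I : Submodule F L) with
      lie_mem' := fun {a b} ha hb => by
        obtain ⟨x, hx, i, hi, rfl⟩ := Submodule.mem_sup.1 ha
        obtain ⟨y, hy, j, hj, rfl⟩ := Submodule.mem_sup.1 hb
        have hiy : ⁅i, y⁆ ∈ I := by rw [← lie_skew]; exact I.neg_mem (hI y i hi)
        rw [add_lie, lie_add, lie_add, add_assoc]
        exact Submodule.add_mem_sup (X.lie_mem hx hy)
          (I.add_mem (hI x j hj) (I.add_mem hiy (hI i j hj))) }
  refine le_antisymm (?_ : X ⊔ I ≤ K) (sup_le (le_sup_left (a := X)) (le_sup_right (b := I)))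
  exact sup_le (fun x hx => Submodule.mem_sup_left hx) (fun x hx => Submodule.mem_sup_right hx)

theorem IsIdealSubalg.coe_sup_left {I Y : LieSubalgebra F L} (hI : IsIdealSubalg I) :
    ((I ⊔ Y : LieSubalgebra F L) : Submodule F L) = (I : Submodule F L) ⊔ Y := by
  rw [sup_comm, hI.coe_sup_right, sup_comm]

theorem IsIdealSubalg.sup_inf_assoc_of_le_left {I Z : LieSubalgebra F L} (hI : IsIdealSubalg I)
    (Y : LieSubalgebra F L) (h : I ≤ Z) : (I ⊔ Y) ⊓ Z = I ⊔ Y ⊓ Z := by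
  apply LieSubalgebra.toSubmodule_injective
  rw [LieSubalgebra.inf_toSubmodule, hI.coe_sup_left, hI.coe_sup_left,
    LieSubalgebra.inf_toSubmodule]
  exact _root_.sup_inf_assoc_of_le (Y : Submodule F L) (show (I : Submodule F L) ≤ Z from h)

theorem IsIdealSubalg.sup_inf_assoc_of_le_right {X I Z : LieSubalgebra F L}
    (hI : IsIdealSubalg I) (h : X ≤ Z) : (X ⊔ I) ⊓ Z = X ⊔ I ⊓ Z := by
  refine le_antisymm (fun x hx => ?_)
    (le_inf (sup_le_sup_left inf_le_left _) (sup_le h inf_le_right))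
  have hx' : x ∈ (X : Submodule F L) ⊔ ((I : Submodule F L) ⊓ Z) := by
    rw [← _root_.sup_inf_assoc_of_le (I : Submodule F L) (show (X : Submodule F L) ≤ Z from h),
      ← hI.coe_sup_right, ← LieSubalgebra.inf_toSubmodule]
    exact hx
  obtain ⟨y, hy, z, hz, rfl⟩ := Submodule.mem_sup.1 hx'
  exact add_mem (le_sup_left (b := I ⊓ Z) hy) (le_sup_right (a := X) (b := I ⊓ Z) hz)

theorem phi_mono {X Y : LieSubalgebra F L} (h : X ≤ Y) : phi X ≤ phi Y :=
  sInf_le_sInf fun _ ⟨hM, hYM⟩ => ⟨hM, h.trans hYM⟩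

theorem exists_isCoatom_of_not_le_phi {X C : LieSubalgebra F L} (h : ¬ C ≤ phi X) :
    ∃ M, IsCoatom M ∧ X ≤ M ∧ ¬ C ≤ M := by
  simpa [phi, le_sInf_iff, and_assoc] using h

theorem IsComplementedInterval.top : IsComplementedInterval (⊤ : LieSubalgebra F L) :=
  fun S hS => ⟨⊤, le_rfl, by rw [inf_top_eq, top_le_iff.1 hS], sup_top_eq _⟩

/-- A complement of `S ⊔ φ(S)` over `S` lies in no maximal subalgebra, hence is `L`. -/
theorem IsComplementedInterval.phi_le [FiniteDimensional F L] {S : LieSubalgebra F L}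
    (hS : IsComplementedInterval S) : phi S ≤ S := by
  obtain ⟨Y, hSY, hmeet, hjoin⟩ := hS (S ⊔ phi S) le_sup_left
  obtain hY | ⟨M, hM, hYM⟩ := IsCoatomic.eq_top_or_exists_le_coatom Y
  · rw [hY, inf_top_eq] at hmeet
    exact le_sup_right.trans hmeet.le
  · have hSM : S ≤ M := hSY.trans hYM
    have hphiM : phi S ≤ M := sInf_le ⟨hM, hSM⟩
    have hjoinM : S ⊔ phi S ⊔ Y ≤ M := sup_le (sup_le hSM hphiM) hYM
    rw [hjoin] at hjoinM
    exact (hM.1 (top_le_iff.1 hjoinM)).elim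

theorem IsComplementedInterval.sup {S C : LieSubalgebra F L} (hS : IsComplementedInterval S)
    (hC : IsIdealSubalg C) : IsComplementedInterval (S ⊔ C) := by
  intro Z hSCZ
  obtain ⟨Y, hSY, hmeet, hjoin⟩ := hS Z (le_sup_left.trans hSCZ)
  refine ⟨Y ⊔ C, sup_le_sup_right hSY C, ?_, ?_⟩
  · rw [inf_comm, sup_comm, hC.sup_inf_assoc_of_le_left Y (le_sup_right.trans hSCZ), inf_comm,
      hmeet, sup_comm]
  · rw [← sup_assoc, hjoin, top_sup_eq]

structure IsChiefFactor (B C : LieSubalgebra F L) : Prop where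
  isIdealSubalg_left : IsIdealSubalg B
  isIdealSubalg_right : IsIdealSubalg C
  lt : B < C
  eq_or_eq : ∀ D : LieSubalgebra F L, IsIdealSubalg D → B ≤ D → D ≤ C → D = B ∨ D = C

theorem IsChiefSeries.isChiefFactor {A : ℕ → LieSubalgebra F L} {n : ℕ}
    (hA : IsChiefSeries A n) {i : ℕ} (hi : i < n) : IsChiefFactor (A i) (A (i + 1)) :=
  ⟨hA.2.2.1 i, hA.2.2.1 (i + 1), (hA.2.2.2 i hi).1, (hA.2.2.2 i hi).2⟩

theorem IsChiefFactor.lie_mem [IsSolvable L] {B C : LieSubalgebra F L} (h : IsChiefFactor B C)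
    {x y : L} (hx : x ∈ C) (hy : y ∈ C) : ⁅x, y⁆ ∈ B := by
  obtain ⟨hB, hC, hBC, hmax⟩ := h
  obtain ⟨I, rfl⟩ := (LieSubalgebra.exists_lieIdeal_coe_eq_iff (K := B)).2 hB
  obtain ⟨J, rfl⟩ := (LieSubalgebra.exists_lieIdeal_coe_eq_iff (K := C)).2 hC
  have hIJ : I ⋖ J := by
    refine ⟨hBC, fun K hIK hKJ => ?_⟩
    have hIK' : (I : LieSubalgebra F L) < K := hIK
    have hKJ' : (K : LieSubalgebra F L) < J := hKJ
    rcases hmax K (fun x a ha => K.lie_mem ha) hIK'.le hKJ'.le with hK | hK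
    · exact hIK'.ne' hK
    · exact hKJ'.ne hK
  exact LieIdeal.lie_le_of_covBy hIJ (LieSubmodule.lie_mem_lie hx hy)

theorem IsChiefFactor.inf_eq_or_le [IsSolvable L] {B C X : LieSubalgebra F L}
    (h : IsChiefFactor B C) (hBX : B ≤ X) (hXC : X ⊔ C = ⊤) : X ⊓ C = B ∨ C ≤ X := by
  have hXC_ideal : IsIdealSubalg (X ⊓ C) := by
    intro z d hd
    have hz : z ∈ (X : Submodule F L) ⊔ C := by
      rw [← h.isIdealSubalg_right.coe_sup_right, hXC]
      trivial
    obtain ⟨x, hx, c, hc, rfl⟩ := Submodule.mem_sup.1 hz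
    rw [add_lie]
    exact add_mem ⟨X.lie_mem hx hd.1, h.isIdealSubalg_right x d hd.2⟩
      (le_inf hBX h.lt.le (h.lie_mem hc hd.2))
  rcases h.eq_or_eq _ hXC_ideal (le_inf hBX h.lt.le) inf_le_right with hB | hC
  · exact Or.inl hB
  · exact Or.inr (hC ▸ inf_le_left)

theorem IsChiefFactor.inf_eq_of_isCoatom [IsSolvable L] {B C M : LieSubalgebra F L}
    (h : IsChiefFactor B C) (hM : IsCoatom M) (hBM : B ≤ M) (hCM : ¬ C ≤ M) : M ⊓ C = B :=
  (h.inf_eq_or_le hBM (hM.not_le_iff_codisjoint.1 hCM).eq_top).resolve_right hCM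

theorem IsChiefFactor.isComplementedInterval_inf [IsSolvable L] {B C W₀ M : LieSubalgebra F L}
    (h : IsChiefFactor B C) (hW₀ : IsComplementedInterval W₀) (hCW₀ : C ≤ W₀)
    (hM : IsCoatom M) (hBM : B ≤ M) (hCM : ¬ C ≤ M) : IsComplementedInterval (W₀ ⊓ M) := by
  set W := W₀ ⊓ M
  have hMC : M ⊔ C = ⊤ := (hM.not_le_iff_codisjoint.1 hCM).eq_top
  have hBW : B ≤ W := le_inf (h.lt.le.trans hCW₀) hBM
  have hW₀_eq : W ⊔ C = W₀ :=
    calc W ⊔ C = C ⊔ M ⊓ W₀ := by rw [sup_comm, inf_comm]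
      _ = (C ⊔ M) ⊓ W₀ := (h.isIdealSubalg_right.sup_inf_assoc_of_le_left M hCW₀).symm
      _ = W₀ := by rw [sup_comm, hMC, top_inf_eq]
  intro Z hWZ
  obtain ⟨Y, hW₀Y, hmeet, hjoin⟩ := hW₀ (Z ⊔ C) (hW₀_eq ▸ sup_le_sup_right hWZ C)
  have hWY : W ≤ Y := inf_le_left.trans hW₀Y
  have hCY : C ≤ Y := hCW₀.trans hW₀Y
  have hZY : Z ⊔ Y = ⊤ := by rw [← hjoin, sup_assoc, sup_eq_right.2 hCY]
  have hZY_le : Z ⊓ Y ≤ W₀ := hmeet ▸ inf_le_inf_right Y le_sup_left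
  have hY : C ⊔ M ⊓ Y = Y := by
    rw [← h.isIdealSubalg_right.sup_inf_assoc_of_le_left M hCY, sup_comm C M, hMC, top_inf_eq]
  have hV : (Z ⊔ M ⊓ Y) ⊔ C = ⊤ := by rw [sup_assoc, sup_comm (M ⊓ Y), hY, hZY]
  -- `Y` complements `Z` if `Z ⊔ M ⊓ Y` meets `C` in `B`; `M ⊓ Y` does if it contains `C`
  rcases h.inf_eq_or_le (hBW.trans (hWZ.trans le_sup_left)) hV with hVC | hCV
  · refine ⟨Y, hWY, le_antisymm ?_ (le_inf hWZ hWY), hZY⟩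
    have hCZY : C ⊓ (Z ⊓ Y) ≤ W :=
      (le_inf (inf_le_right.trans (inf_le_left.trans le_sup_left)) inf_le_left).trans
        (hVC.le.trans hBW)
    calc Z ⊓ Y = (W ⊔ C) ⊓ (Z ⊓ Y) := by rw [hW₀_eq]; exact (inf_eq_right.2 hZY_le).symm
      _ = W ⊔ C ⊓ (Z ⊓ Y) :=
        h.isIdealSubalg_right.sup_inf_assoc_of_le_right (le_inf hWZ hWY)
      _ ≤ W := sup_le le_rfl hCZY
  · have hWMY : W ≤ M ⊓ Y := le_inf inf_le_right hWY
    refine ⟨M ⊓ Y, hWMY, le_antisymm ?_ (le_inf hWZ hWMY), ?_⟩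
    · exact le_inf ((inf_le_inf_left Z inf_le_right).trans hZY_le)
        (inf_le_right.trans inf_le_left)
    · refine top_unique ?_
      calc ⊤ = Z ⊔ (C ⊔ M ⊓ Y) := by rw [hY, hZY]
        _ ≤ Z ⊔ M ⊓ Y := sup_le le_sup_left (sup_le hCV le_sup_right)

theorem IsUFrattiniFactor.le_of_isComplementedInterval [FiniteDimensional F L]
    {U B C S : LieSubalgebra F L} (hFr : IsUFrattiniFactor U B C) (hUS : U ≤ S) (hBS : B ≤ S)
    (hS : IsComplementedInterval S) : C ≤ S := by
  rcases hFr with hC | hUB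
  · exact hC.trans ((phi_mono (sup_le hUS hBS)).trans hS.phi_le)
  · exact (le_top.trans hUB.ge).trans (sup_le hUS hBS)

theorem IsChiefFactor.exists_isCoatom_inf_le [IsSolvable L] [FiniteDimensional F L]
    {U B C S : LieSubalgebra F L} (h : IsChiefFactor B C) (hFr : ¬ IsUFrattiniFactor U B C)
    (hUS : U ≤ S) (hBS : B ≤ S) (hS : IsComplementedInterval S) :
    ∃ M, IsCoatom M ∧ U ⊔ B ≤ M ∧ ¬ C ≤ M ∧ (S ⊔ C) ⊓ M ≤ S := by
  by_cases hCS : C ≤ S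
  · obtain ⟨M, hM, hUBM, hCM⟩ := exists_isCoatom_of_not_le_phi fun hC => hFr (Or.inl hC)
    exact ⟨M, hM, hUBM, hCM, inf_le_left.trans (sup_le le_rfl hCS)⟩
  · obtain ⟨M, hM, hSM, hCM⟩ :=
      exists_isCoatom_of_not_le_phi fun hC => hCS (hC.trans hS.phi_le)
    refine ⟨M, hM, (sup_le hUS hBS).trans hSM, hCM, ?_⟩
    rw [h.isIdealSubalg_right.sup_inf_assoc_of_le_right hSM, inf_comm,
      h.inf_eq_of_isCoatom hM (hBS.trans hSM) hCM]
    exact sup_le le_rfl hBS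

def IsPrefrattiniFrom (U : LieSubalgebra F L) (A : ℕ → LieSubalgebra F L) (n k : ℕ)
    (W : LieSubalgebra F L) : Prop :=
  ∃ M : ℕ → LieSubalgebra F L,
    (∀ i, k ≤ i → i < n → ¬ IsUFrattiniFactor U (A i) (A (i + 1)) →
      IsCoatom (M i) ∧ U ⊔ A i ≤ M i ∧ ¬ A (i + 1) ≤ M i) ∧
    W = ⨅ i ∈ {i | k ≤ i ∧ i < n ∧ ¬ IsUFrattiniFactor U (A i) (A (i + 1))}, M i

section IsPrefrattiniFrom

variable {U W : LieSubalgebra F L} {A : ℕ → LieSubalgebra F L} {n k : ℕ}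

theorem IsPrefrattiniFrom.isPrefrattiniWrt (h : IsPrefrattiniFrom U A n 0 W) :
    IsPrefrattiniWrt U A n W := by
  obtain ⟨M, hM, rfl⟩ := h
  exact ⟨M, fun i => hM i i.zero_le, by simp only [Nat.zero_le, true_and]⟩

theorem isPrefrattiniFrom_top (U : LieSubalgebra F L) (A : ℕ → LieSubalgebra F L) (n : ℕ) :
    IsPrefrattiniFrom U A n n ⊤ :=
  ⟨fun _ => ⊤, fun i hni hin => absurd hin hni.not_gt, by simp⟩

theorem IsPrefrattiniFrom.of_succ (h : IsPrefrattiniFrom U A n (k + 1) W)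
    (hFr : IsUFrattiniFactor U (A k) (A (k + 1))) : IsPrefrattiniFrom U A n k W := by
  obtain ⟨M, hM, rfl⟩ := h
  have hk : ∀ i, k ≤ i → ¬ IsUFrattiniFactor U (A i) (A (i + 1)) → k + 1 ≤ i :=
    fun i hki hnFr => hki.lt_of_ne (by rintro rfl; exact hnFr hFr)
  refine ⟨M, fun i hki hin hnFr => hM i (hk i hki hnFr) hin hnFr, ?_⟩
  congr! 3 with i
  exact ⟨fun ⟨hki, hin, hnFr⟩ => ⟨Nat.le_of_succ_le hki, hin, hnFr⟩,
    fun ⟨hki, hin, hnFr⟩ => ⟨hk i hki hnFr, hin, hnFr⟩⟩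

theorem IsPrefrattiniFrom.inf_of_succ (h : IsPrefrattiniFrom U A n (k + 1) W) (hk : k < n)
    (hFr : ¬ IsUFrattiniFactor U (A k) (A (k + 1))) {M₀ : LieSubalgebra F L}
    (hM₀ : IsCoatom M₀) (hUM₀ : U ⊔ A k ≤ M₀) (hCM₀ : ¬ A (k + 1) ≤ M₀) :
    IsPrefrattiniFrom U A n k (W ⊓ M₀) := by
  obtain ⟨M, hM, rfl⟩ := h
  refine ⟨Function.update M k M₀, fun i hki hin hnFr => ?_, ?_⟩
  · rcases hki.eq_or_lt with rfl | hki
    · rw [Function.update_self]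
      exact ⟨hM₀, hUM₀, hCM₀⟩
    · rw [Function.update_of_ne hki.ne']
      exact hM i hki hin hnFr
  · have hset : {i | k ≤ i ∧ i < n ∧ ¬ IsUFrattiniFactor U (A i) (A (i + 1))} =
        insert k {i | k + 1 ≤ i ∧ i < n ∧ ¬ IsUFrattiniFactor U (A i) (A (i + 1))} := by
      ext i
      simp only [Set.mem_ofPred_eq, Set.mem_insert_iff]
      constructor
      · rintro ⟨hki, hin, hnFr⟩
        rcases hki.eq_or_lt with rfl | hki
        · exact Or.inl rfl
        · exact Or.inr ⟨hki, hin, hnFr⟩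
      · rintro (rfl | ⟨hki, hin, hnFr⟩)
        · exact ⟨le_rfl, hk, hFr⟩
        · exact ⟨Nat.le_of_succ_le hki, hin, hnFr⟩
    rw [hset, iInf_insert, Function.update_self, inf_comm]
    congr 1
    exact iInf_congr fun i => iInf_congr fun hi =>
      (Function.update_of_ne (Nat.lt_of_succ_le hi.1).ne' _ _).symm

end IsPrefrattiniFrom

theorem IsChiefSeries.exists_isPrefrattiniFrom_le [IsSolvable L] [FiniteDimensional F L]
    {A : ℕ → LieSubalgebra F L} {n : ℕ} (hA : IsChiefSeries A n) (U : LieSubalgebra F L)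
    {k : ℕ} (hk : k ≤ n) :
    ∀ S, U ≤ S → A k ≤ S → IsComplementedInterval S →
      ∃ W ≤ S, U ⊔ A k ≤ W ∧ IsComplementedInterval W ∧
        IsPrefrattiniFrom U A n k W := by
  induction hk using Nat.decreasingInduction with
  | self =>
    intro S _ hAS _
    have hS : S = ⊤ := top_unique (hA.2.1 ▸ hAS)
    exact ⟨⊤, hS.ge, le_top, .top, isPrefrattiniFrom_top U A n⟩
  | of_succ k hk ih =>
    intro S hUS hBS hS
    have hBC := hA.isChiefFactor hk
    obtain ⟨W₀, hW₀S, hUCW₀, hW₀, hpre⟩ :=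
      ih (S ⊔ A (k + 1)) (le_sup_of_le_left hUS) le_sup_right (hS.sup hBC.isIdealSubalg_right)
    have hUBW₀ : U ⊔ A k ≤ W₀ := (sup_le_sup_left hBC.lt.le U).trans hUCW₀
    by_cases hFr : IsUFrattiniFactor U (A k) (A (k + 1))
    · have hCS := hFr.le_of_isComplementedInterval hUS hBS hS
      exact ⟨W₀, hW₀S.trans (sup_le le_rfl hCS), hUBW₀, hW₀, hpre.of_succ hFr⟩
    · obtain ⟨M, hM, hUBM, hCM, hSM⟩ := hBC.exists_isCoatom_inf_le hFr hUS hBS hS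
      exact ⟨W₀ ⊓ M, (inf_le_inf_right M hW₀S).trans hSM, le_inf hUBW₀ hUBM,
        hBC.isComplementedInterval_inf hW₀ (le_sup_right.trans hUCW₀) hM
          (le_sup_right.trans hUBM) hCM,
        hpre.inf_of_succ hk hFr hM hUBM hCM⟩

end Paper

theorem stmt13 {F : Type*} [Field F] {L : Type*} [LieRing L] [LieAlgebra F L]
    [LieAlgebra.IsSolvable L] [FiniteDimensional F L]
    (U : LieSubalgebra F L) (n : ℕ) (A : ℕ → LieSubalgebra F L)
    (hA : Paper.IsChiefSeries A n) (S : LieSubalgebra F L)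
    (hS : S ∈ Paper.OmegaMin U) :
    Paper.IsPrefrattiniWrt U A n S := by
  obtain ⟨⟨hUS, hS⟩, hmin⟩ := hS
  obtain ⟨W, hWS, hUW, hW, hpre⟩ :=
    hA.exists_isPrefrattiniFrom_le U n.zero_le S hUS (hA.1 ▸ bot_le) hS
  rw [← hmin W ⟨le_sup_left.trans hUW, hW⟩ hWS]
  exact hpre.isPrefrattiniWrt
end

section
/- For every solvable Lie algebra L and subalgebra U, φ(U,L) equals the intersection of all U-prefrattini subalgebras of L. -/
open LieAlgebra

/-!
Every maximal subalgebra entering the intersection that defines a `U`-prefrattini subalgebra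
contains `U`, so `φ(U,L)` lies in every `U`-prefrattini subalgebra. Conversely, let `M ⊇ U` be
maximal, let `K` be an ideal of `L` maximal among those contained in `M`, and let `A/K` be a chief
factor. Then `A ⊄ M ⊇ U + K`, so `A/K` is not `U`-Frattini, and along a chief series through
`K < A` the subalgebra `M` may be chosen for this factor: the resulting `U`-prefrattini
subalgebra lies in `M`.
-/

section SeqAppend

variable {α : Type*}

def seqAppend (C D : ℕ → α) (m : ℕ) : ℕ → α :=
  fun i => if i ≤ m then C i else D (i - m)

lemma seqAppend_of_le {C D : ℕ → α} {m i : ℕ} (h : i ≤ m) : seqAppend C D m i = C i :=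
  if_pos h

lemma seqAppend_add {C D : ℕ → α} {m : ℕ} (hCD : C m = D 0) (j : ℕ) :
    seqAppend C D m (m + j) = D j := by
  unfold seqAppend
  split_ifs with h
  · obtain rfl : j = 0 := by omega
    simpa using hCD
  · simp

end SeqAppend

namespace Paper

variable {F : Type*} [Field F] {L : Type*} [LieRing L] [LieAlgebra F L]

lemma isIdealSubalg_bot : IsIdealSubalg (⊥ : LieSubalgebra F L) := by
  intro x a ha
  rw [LieSubalgebra.mem_bot] at ha ⊢
  rw [ha, lie_zero]

lemma isIdealSubalg_top : IsIdealSubalg (⊤ : LieSubalgebra F L) := fun _ _ _ => trivial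

def IsChiefFactor_s16 (P R : LieSubalgebra F L) : Prop :=
  P < R ∧ ∀ B : LieSubalgebra F L, IsIdealSubalg B → P ≤ B → B ≤ R → B = P ∨ B = R

def IsChiefChain (C : ℕ → LieSubalgebra F L) (m : ℕ) : Prop :=
  (∀ i, IsIdealSubalg (C i)) ∧ ∀ i < m, IsChiefFactor_s16 (C i) (C (i + 1))

lemma isChiefChain_pair {P R : LieSubalgebra F L} (hP : IsIdealSubalg P) (hR : IsIdealSubalg R)
    (h : IsChiefFactor_s16 P R) : IsChiefChain (fun i => if i = 0 then P else R) 1 := by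
  refine ⟨fun i => ?_, fun i hi => ?_⟩
  · show IsIdealSubalg (if i = 0 then P else R)
    split_ifs
    exacts [hP, hR]
  · obtain rfl : i = 0 := by omega
    simpa using h

lemma IsChiefChain.append {C D : ℕ → LieSubalgebra F L} {m k : ℕ} (hC : IsChiefChain C m)
    (hD : IsChiefChain D k) (hCD : C m = D 0) : IsChiefChain (seqAppend C D m) (m + k) := by
  refine ⟨fun i => ?_, fun i hi => ?_⟩
  · unfold seqAppend
    split_ifs
    exacts [hC.1 i, hD.1 _]
  · by_cases him : i < m
    · rw [seqAppend_of_le him.le, seqAppend_of_le him]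
      exact hC.2 i him
    · obtain ⟨j, rfl⟩ := Nat.exists_eq_add_of_le (not_lt.mp him)
      rw [seqAppend_add hCD, add_assoc, seqAppend_add hCD]
      exact hD.2 j (by omega)

lemma not_isUFrattiniFactor {U K A M : LieSubalgebra F L} (hM : IsCoatom M) (hUKM : U ⊔ K ≤ M)
    (hAM : ¬ A ≤ M) : ¬ IsUFrattiniFactor U K A := by
  rintro (hA | hUK)
  · exact hAM (hA.trans (sInf_le ⟨hM, hUKM⟩))
  · exact hM.1 (top_le_iff.mp (hUK ▸ hUKM))

lemma exists_isCoatom_of_not_isUFrattiniFactor {U K A : LieSubalgebra F L}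
    (h : ¬ IsUFrattiniFactor U K A) : ∃ M, IsCoatom M ∧ U ⊔ K ≤ M ∧ ¬ A ≤ M := by
  by_contra! hcon
  exact h (Or.inl (le_sInf fun M ⟨hM, hUKM⟩ => hcon M hM hUKM))

lemma exists_isPrefrattiniWrt_le {U M : LieSubalgebra F L} {A : ℕ → LieSubalgebra F L}
    {n j : ℕ} (hj : j < n) (hM : IsCoatom M) (hUM : U ⊔ A j ≤ M) (hAM : ¬ A (j + 1) ≤ M) :
    ∃ B, IsPrefrattiniWrt U A n B ∧ B ≤ M := by
  classical
  have hN : ∀ i, ∃ N, ¬ IsUFrattiniFactor U (A i) (A (i + 1)) →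
      IsCoatom N ∧ U ⊔ A i ≤ N ∧ ¬ A (i + 1) ≤ N := fun i => by
    by_cases h : IsUFrattiniFactor U (A i) (A (i + 1))
    · exact ⟨⊤, fun h' => absurd h h'⟩
    · obtain ⟨N, hN⟩ := exists_isCoatom_of_not_isUFrattiniFactor h
      exact ⟨N, fun _ => hN⟩
  choose N hN using hN
  refine ⟨_, ⟨Function.update N j M, fun i _ hi => ?_, rfl⟩,
    iInf₂_le_of_le j ⟨hj, not_isUFrattiniFactor hM hUM hAM⟩ (by simp)⟩
  by_cases hij : i = j
  · subst hij
    rw [Function.update_self]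
    exact ⟨hM, hUM, hAM⟩
  · rw [Function.update_of_ne hij]
    exact hN i hi

lemma phi_le_of_isPrefrattiniWrt {U B : LieSubalgebra F L} {A : ℕ → LieSubalgebra F L} {n : ℕ}
    (hB : IsPrefrattiniWrt U A n B) : phi U ≤ B := by
  obtain ⟨M, hM, rfl⟩ := hB
  exact le_iInf₂ fun i ⟨hi, hF⟩ => sInf_le ⟨(hM i hi hF).1, le_sup_left.trans (hM i hi hF).2.1⟩

variable [FiniteDimensional F L]

instance wellFoundedLT_lieSubalgebra : WellFoundedLT (LieSubalgebra F L) :=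
  StrictMono.wellFoundedLT (f := fun K : LieSubalgebra F L => K.toSubmodule)
    (Monotone.strictMono_of_injective (fun _ _ h => h) LieSubalgebra.toSubmodule_injective)

lemma exists_isChiefFactor {P Q : LieSubalgebra F L} (hQ : IsIdealSubalg Q) (hPQ : P < Q) :
    ∃ R, IsIdealSubalg R ∧ R ≤ Q ∧ IsChiefFactor_s16 P R := by
  obtain ⟨R, ⟨hR, hPR, hRQ⟩, hRmin⟩ :=
    wellFounded_lt.has_min {R | IsIdealSubalg R ∧ P < R ∧ R ≤ Q} ⟨Q, hQ, hPQ, le_rfl⟩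
  refine ⟨R, hR, hRQ, hPR, fun B hB hPB hBR => ?_⟩
  rcases hPB.eq_or_lt with rfl | hPB
  · exact Or.inl rfl
  · exact Or.inr (hBR.eq_of_not_lt (hRmin B ⟨hB, hPB, hBR.trans hRQ⟩))

lemma exists_isChiefChain {P Q : LieSubalgebra F L} (hP : IsIdealSubalg P)
    (hQ : IsIdealSubalg Q) (hPQ : P ≤ Q) :
    ∃ m C, C 0 = P ∧ C m = Q ∧ IsChiefChain C m := by
  induction P using WellFoundedGT.induction with
  | _ P ih =>
    rcases hPQ.eq_or_lt with rfl | hPQ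
    · exact ⟨0, fun _ => P, rfl, rfl, fun _ => hP, fun _ h => absurd h (Nat.not_lt_zero _)⟩
    obtain ⟨R, hR, hRQ, hPR⟩ := exists_isChiefFactor hQ hPQ
    obtain ⟨m, C, hC0, hCm, hC⟩ := ih R hPR.1 hR hRQ
    refine ⟨1 + m, _, seqAppend_of_le zero_le_one, ?_,
      (isChiefChain_pair hP hR hPR).append hC (by simp [hC0])⟩
    rw [seqAppend_add (by simp [hC0]), hCm]

lemma exists_isChiefSeries_of_isChiefFactor {K A : LieSubalgebra F L} (hK : IsIdealSubalg K)
    (hA : IsIdealSubalg A) (hKA : IsChiefFactor_s16 K A) :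
    ∃ n S j, IsChiefSeries S n ∧ j < n ∧ S j = K ∧ S (j + 1) = A := by
  obtain ⟨m₁, C₁, hC₁0, hC₁m, hC₁⟩ := exists_isChiefChain isIdealSubalg_bot hK bot_le
  obtain ⟨m₂, C₂, hC₂0, hC₂m, hC₂⟩ := exists_isChiefChain hA isIdealSubalg_top le_top
  set D := seqAppend (fun i => if i = 0 then K else A) C₂ 1
  have hD : IsChiefChain D (1 + m₂) := (isChiefChain_pair hK hA hKA).append hC₂ (by simp [hC₂0])
  have hD0 : D 0 = K := seqAppend_of_le zero_le_one
  have hD1 : D 1 = A := seqAppend_of_le le_rfl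
  have hDm : D (1 + m₂) = ⊤ := (seqAppend_add (by simp [hC₂0]) m₂).trans hC₂m
  refine ⟨m₁ + (1 + m₂), seqAppend C₁ D m₁, m₁,
    ⟨?_, ?_, hC₁.append hD (hC₁m.trans hD0.symm)⟩, by omega, ?_, ?_⟩
  · rw [seqAppend_of_le (Nat.zero_le _), hC₁0]
  · rw [seqAppend_add (hC₁m.trans hD0.symm), hDm]
  · rw [seqAppend_of_le le_rfl, hC₁m]
  · rw [seqAppend_add (hC₁m.trans hD0.symm), hD1]

lemma exists_maximal_isIdealSubalg_le (M : LieSubalgebra F L) :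
    ∃ K, IsIdealSubalg K ∧ K ≤ M ∧ ∀ K', IsIdealSubalg K' → K' ≤ M → ¬ K < K' := by
  obtain ⟨K, ⟨hK, hKM⟩, hKmax⟩ :=
    wellFounded_gt.has_min {K | IsIdealSubalg K ∧ K ≤ M} ⟨⊥, isIdealSubalg_bot, bot_le⟩
  exact ⟨K, hK, hKM, fun K' hK' hK'M => hKmax K' ⟨hK', hK'M⟩⟩

lemma exists_isPrefrattini_le_of_isCoatom {U M : LieSubalgebra F L}
    (hM : IsCoatom M) (hUM : U ≤ M) : ∃ B, IsPrefrattini U B ∧ B ≤ M := by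
  obtain ⟨K, hK, hKM, hKmax⟩ := exists_maximal_isIdealSubalg_le M
  obtain ⟨A, hA, -, hKA⟩ := exists_isChiefFactor isIdealSubalg_top (hKM.trans_lt hM.lt_top)
  have hAM : ¬ A ≤ M := fun hAM => hKmax A hA hAM hKA.1
  obtain ⟨n, S, j, hS, hj, hSj, hSj₁⟩ := exists_isChiefSeries_of_isChiefFactor hK hA hKA
  obtain ⟨B, hB, hBM⟩ :=
    exists_isPrefrattiniWrt_le hj hM (hSj ▸ sup_le hUM hKM) (hSj₁ ▸ hAM)
  exact ⟨B, ⟨n, S, hS, hB⟩, hBM⟩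

end Paper

theorem stmt16_general {F : Type*} [Field F] {L : Type*} [LieRing L] [LieAlgebra F L]
    [FiniteDimensional F L]
    (U : LieSubalgebra F L) :
    Paper.phi U = sInf {B : LieSubalgebra F L | Paper.IsPrefrattini U B} := by
  refine le_antisymm (le_sInf fun _ ⟨_, _, _, hB⟩ => Paper.phi_le_of_isPrefrattiniWrt hB)
    (le_sInf ?_)
  rintro M ⟨hM, hUM⟩
  obtain ⟨B, hB, hBM⟩ := Paper.exists_isPrefrattini_le_of_isCoatom hM hUM
  exact sInf_le_of_le hB hBM

theorem stmt16 {F : Type*} [Field F] {L : Type*} [LieRing L] [LieAlgebra F L]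
    [LieAlgebra.IsSolvable L] [FiniteDimensional F L]
    (U : LieSubalgebra F L) :
    Paper.phi U = sInf {B : LieSubalgebra F L | Paper.IsPrefrattini U B} :=
  stmt16_general U
end
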